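/- Let γ : [0,∞) → ℍ be a continuous curve landing at ∞ such that arg(γ(t)) → θ as t → ∞ for some θ ∈ (−π/2, π/2). If {z_n} ⊂ ℍ is a sequence with |z_n| → ∞ and, for each n, π_n is a projection of z_n onto γ, then |π_n| → ∞ as n → ∞. -/

import Mathlib

open Complex Filter Topology

/-- Pseudo-hyperbolic distance on the right half-plane ℍ = {Re z > 0}. -/
noncomputable def rhoH (z w : ℂ) : ℝ := ‖(z - w) / (z + (starRingEnd ℂ) w)‖

/-- Hyperbolic distance on the right half-plane. -/
noncomputable def dH (z w : ℂ) : ℝ := (1/2) * Real.log ((1 + rhoH z w) / (1 - rhoH z w))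

/-- `p` is a hyperbolic projection of `z` onto the curve `γ : [0,∞) → ℍ`. -/
def IsProjH (γ : ℝ → ℂ) (z p : ℂ) : Prop :=
  (∃ t ≥ (0:ℝ), p = γ t) ∧ ∀ t ≥ (0:ℝ), dH z p ≤ dH z (γ t)

/-- `f` is a hyperbolic holomorphic self-map of the right half-plane with
Denjoy–Wolff point ∞: it preserves ℍ, is holomorphic on ℍ, its iterates tend to ∞
uniformly on compact subsets of ℍ, and `f(z)/z → c` for some `c > 1` as `z → ∞`
within every sector `{|arg z| < φ}`, `φ ∈ (0, π/2)`. -/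
def HyperbolicAtInf (f : ℂ → ℂ) : Prop :=
  (∀ z : ℂ, 0 < z.re → 0 < (f z).re) ∧
  DifferentiableOn ℂ f {z : ℂ | 0 < z.re} ∧
  (∀ K : Set ℂ, K ⊆ {z : ℂ | 0 < z.re} → IsCompact K →
    ∀ M : ℝ, ∃ N : ℕ, ∀ n ≥ N, ∀ z ∈ K, M < ‖f^[n] z‖) ∧
  (∃ c : ℝ, 1 < c ∧ ∀ φ ∈ Set.Ioo (0:ℝ) (Real.pi/2), ∀ ε > (0:ℝ), ∃ R : ℝ,
    ∀ z : ℂ, 0 < z.re → |z.arg| < φ → R < ‖z‖ →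
      ‖f z / z - (c:ℂ)‖ < ε)

/-! Writing `ρ = rhoH z w`, one has `1 - ρ² = 4 Re z Re w / ‖z + w̄‖²`, and `dH` increases with `ρ`.
Hence a projection `p` of `z` beats every curve point `w` in the sense
`‖z + p̄‖² Re w ≤ ‖z + w̄‖² Re p`. Since `γ` lands non-tangentially, for `‖z‖ = r` large there is
a curve point `w` with `‖w‖ = r` and `Re w ≥ c r`, `c > 0`; then the right-hand side is at most
`4 r² Re p ≤ 4 r² ‖p‖`, while, if `‖p‖ ≤ r / 2`, the left-hand side is at least `c r³ / 4`.
So `‖p‖ ≥ c r / 16`. -/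

open ComplexConjugate

section PseudoHyperbolic

variable {z w : ℂ}

lemma norm_add_conj_sq_sub_norm_sub_sq (z w : ℂ) :
    ‖z + conj w‖ ^ 2 - ‖z - w‖ ^ 2 = 4 * z.re * w.re := by
  simp only [Complex.sq_norm, Complex.normSq_apply, add_re, add_im, sub_re, sub_im, conj_re,
    conj_im]
  ring

lemma norm_add_conj_pos (hz : 0 < z.re) (hw : 0 < w.re) : 0 < ‖z + conj w‖ := by
  refine norm_pos_iff.mpr fun h => ?_
  have h0 : (z + conj w).re = 0 := by rw [h, zero_re]
  rw [add_re, conj_re] at h0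
  linarith

lemma rhoH_eq_div : rhoH z w = ‖z - w‖ / ‖z + conj w‖ := norm_div _ _

lemma rhoH_nonneg : 0 ≤ rhoH z w := norm_nonneg _

lemma rhoH_lt_one (hz : 0 < z.re) (hw : 0 < w.re) : rhoH z w < 1 := by
  have hpos := norm_add_conj_pos hz hw
  rw [rhoH_eq_div, div_lt_one hpos]
  refine lt_of_pow_lt_pow_left₀ 2 hpos.le ?_
  nlinarith [norm_add_conj_sq_sub_norm_sub_sq z w, mul_pos hz hw]

lemma one_sub_rhoH_sq (hz : 0 < z.re) (hw : 0 < w.re) :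
    1 - rhoH z w ^ 2 = 4 * z.re * w.re / ‖z + conj w‖ ^ 2 := by
  have hpos := norm_add_conj_pos hz hw
  rw [rhoH_eq_div, div_pow, eq_div_iff (by positivity), sub_mul, one_mul,
    div_mul_cancel₀ _ (by positivity), ← norm_add_conj_sq_sub_norm_sub_sq]

lemma dH_lt_dH_of_rhoH_lt {u : ℂ} (hz : 0 < z.re) (hw : 0 < w.re) (h : rhoH z u < rhoH z w) :
    dH z u < dH z w := by
  have hw1 : 0 < 1 - rhoH z w := by linarith [rhoH_lt_one hz hw]
  have hu1 : 0 < 1 - rhoH z u := by linarith [rhoH_lt_one hz hw]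
  have hu0 : 0 ≤ rhoH z u := rhoH_nonneg
  have hmono : (1 + rhoH z u) / (1 - rhoH z u) < (1 + rhoH z w) / (1 - rhoH z w) := by
    rw [div_lt_div_iff₀ hu1 hw1]
    nlinarith
  unfold dH
  gcongr

lemma norm_add_conj_sq_mul_re_le_of_dH_le {p : ℂ} (hz : 0 < z.re) (hp : 0 < p.re)
    (hw : 0 < w.re) (hd : dH z p ≤ dH z w) :
    ‖z + conj p‖ ^ 2 * w.re ≤ ‖z + conj w‖ ^ 2 * p.re := by
  have hρ : rhoH z p ≤ rhoH z w := not_lt.mp fun h => (dH_lt_dH_of_rhoH_lt hz hp h).not_ge hd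
  have hsq : 1 - rhoH z w ^ 2 ≤ 1 - rhoH z p ^ 2 := by
    have := pow_le_pow_left₀ rhoH_nonneg hρ 2
    linarith
  rw [one_sub_rhoH_sq hz hw, one_sub_rhoH_sq hz hp,
    div_le_div_iff₀ (pow_pos (norm_add_conj_pos hz hw) 2) (pow_pos (norm_add_conj_pos hz hp) 2)]
    at hsq
  nlinarith

end PseudoHyperbolic

lemma norm_mul_le_sixteen_mul_norm_of_dH_le {z p w : ℂ} {c : ℝ} (hz : 0 < z.re)
    (hp : 0 < p.re) (hw : 0 < w.re) (hd : dH z p ≤ dH z w) (hwz : ‖w‖ = ‖z‖)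
    (hc : ‖z‖ * c ≤ w.re) :
    ‖z‖ * c ≤ 16 * ‖p‖ := by
  set r := ‖z‖
  have hr : 0 < r := lt_of_lt_of_le hz (re_le_norm z)
  have hwr : w.re ≤ r := hwz ▸ re_le_norm w
  rcases le_or_gt (r / 2) ‖p‖ with hbig | hsmall
  · linarith
  have hkey := norm_add_conj_sq_mul_re_le_of_dH_le hz hp hw hd
  have hlow : r / 2 ≤ ‖z + conj p‖ := by
    have := norm_sub_norm_le z (-conj p)
    rw [sub_neg_eq_add, norm_neg, norm_conj] at this
    linarith
  have hup : ‖z + conj w‖ ≤ 2 * r := by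
    have := norm_add_le z (conj w)
    rw [norm_conj, hwz] at this
    linarith
  have hchain : (r / 2) ^ 2 * (r * c) ≤ (2 * r) ^ 2 * ‖p‖ :=
    calc (r / 2) ^ 2 * (r * c) ≤ (r / 2) ^ 2 * w.re := by gcongr
      _ ≤ ‖z + conj p‖ ^ 2 * w.re := by gcongr
      _ ≤ ‖z + conj w‖ ^ 2 * p.re := hkey
      _ ≤ (2 * r) ^ 2 * ‖p‖ := by gcongr; exact re_le_norm p
  nlinarith [mul_pos hr hr]

lemma eventually_exists_norm_eq_and_mul_le_re {γ : ℝ → ℂ} {θ c : ℝ}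
    (hγc : ContinuousOn γ (Set.Ici 0)) (hland : Tendsto (fun t => ‖γ t‖) atTop atTop)
    (hslope : Tendsto (fun t => (γ t).arg) atTop (𝓝 θ)) (hc : c < Real.cos θ) :
    ∀ᶠ r in atTop, ∃ t ≥ (0 : ℝ), ‖γ t‖ = r ∧ r * c ≤ (γ t).re := by
  obtain ⟨T₀, hT₀⟩ := eventually_atTop.mp
    (((Real.continuous_cos.tendsto θ).comp hslope).eventually (eventually_ge_nhds hc))
  set T := max T₀ 0
  have hivt := intermediate_value_Ici (hγc.mono (Set.Ici_subset_Ici.mpr (le_max_right T₀ 0))).norm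
    hland
  filter_upwards [eventually_ge_atTop ‖γ T‖] with r hr
  obtain ⟨t, ht, rfl⟩ := hivt hr
  have htT : T ≤ t := ht
  refine ⟨t, (le_max_right _ _).trans htT, rfl, ?_⟩
  rw [← norm_mul_cos_arg (γ t)]
  exact mul_le_mul_of_nonneg_left (hT₀ t ((le_max_left _ _).trans htT)) (norm_nonneg _)

/-- projections onto a curve landing at ∞ non-tangentially of a
sequence tending to ∞ also tend to ∞. -/
theorem stmt6 (γ : ℝ → ℂ)
    (hγc : ContinuousOn γ (Set.Ici 0))
    (hγin : ∀ t ≥ (0:ℝ), 0 < (γ t).re)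
    (hland : Tendsto (fun t : ℝ => ‖γ t‖) atTop atTop)
    (θ : ℝ) (hθ : θ ∈ Set.Ioo (-(Real.pi/2)) (Real.pi/2))
    (hslope : Tendsto (fun t : ℝ => (γ t).arg) atTop (𝓝 θ))
    (z : ℕ → ℂ) (hz : ∀ n, 0 < (z n).re)
    (hzinf : Tendsto (fun n : ℕ => ‖z n‖) atTop atTop)
    (p : ℕ → ℂ) (hp : ∀ n : ℕ, IsProjH γ (z n) (p n)) :
    Tendsto (fun n : ℕ => ‖p n‖) atTop atTop := by
  have hcos : 0 < Real.cos θ := Real.cos_pos_of_mem_Ioo hθ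
  have hc : 0 < Real.cos θ / 2 := half_pos hcos
  have hcurve := eventually_exists_norm_eq_and_mul_le_re hγc hland hslope (half_lt_self hcos)
  refine tendsto_atTop_mono' atTop ?_
    ((hzinf.atTop_mul_const hc).atTop_div_const (by norm_num : (0:ℝ) < 16))
  filter_upwards [hzinf.eventually hcurve] with n ⟨t, ht, hnorm, hre⟩
  obtain ⟨⟨s, hs, hps⟩, hmin⟩ := hp n
  have hbound := norm_mul_le_sixteen_mul_norm_of_dH_le (hz n) (hps ▸ hγin s hs) (hγin t ht)
    (hmin t ht) hnorm hre
  rw [div_le_iff₀ (by norm_num)]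
  linarith
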